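/- arXiv:1009.4768 — 3 statements merged into one kernel-verified Lean document; each statement's English description precedes it below -/
import Mathlib

section
/- Suppose a closed set N ⊂ ℝ² is invariant under rotation by angle 2π/n about the origin, and its set of radial levels contains the interval [a,b] with b ≤ ρ, where within each angular sector of opening 2π/n the part of N realizes every radius in [a,b]. Then H¹(N) ≥ n(b − a). -/
open Set MeasureTheory

/-- (Identifying `ℝ²` with `ℂ`.)  Suppose a closed set `N ⊂ ℂ` is
invariant under rotation by angle `2π/n` about the origin, and within each angular sector
`S_k = {θ ∈ [2πk/n − π/n, 2πk/n + π/n)}` the part of `N` realizes every radius in `[a,b]`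
(with `0 ≤ a ≤ b ≤ ρ`).  Then `H¹(N) ≥ n(b − a)`. -/
theorem stmt10 (n : ℕ) (hn : 1 ≤ n) (N : Set ℂ) (hclosed : IsClosed N)
    (a b ρ : ℝ) (ha : 0 ≤ a) (hab : a ≤ b) (hbρ : b ≤ ρ)
    (hinv : ∀ z ∈ N, Complex.exp (2 * Real.pi / n * Complex.I) * z ∈ N)
    (hsec : ∀ k : ℕ, k < n → ∀ r ∈ Icc a b, ∃ z ∈ N, ‖z‖ = r ∧
      ∃ θ ∈ Ico (2 * Real.pi * (k : ℝ) / n - Real.pi / n)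
                (2 * Real.pi * (k : ℝ) / n + Real.pi / n),
        z = (r : ℂ) * Complex.exp ((θ : ℂ) * Complex.I)) :
    ENNReal.ofReal (n * (b - a)) ≤ μH[1] N := by
  have hπ : (0:ℝ) < 2 * Real.pi := by positivity
  have hn0 : (0:ℝ) < n := by exact_mod_cast hn
  set A : ℝ := -(Real.pi / n) with hA
  set g : ℂ → ℝ := fun z => toIcoMod hπ A (Complex.arg z) with hg
  have hgmeas : Measurable g := by
    have h1 : Measurable fun x : ℝ => toIcoMod hπ A x := by
      have : (fun x : ℝ => toIcoMod hπ A x)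
          = fun x : ℝ => x - (⌊(x - A) / (2 * Real.pi)⌋ : ℝ) * (2 * Real.pi) := by
        funext x
        rw [toIcoMod, toIcoDiv_eq_floor, zsmul_eq_mul]
      rw [this]
      refine measurable_id.sub (Measurable.mul_const ?_ _)
      exact (measurable_from_top (f := (Int.cast : ℤ → ℝ))).comp
        (Measurable.floor ((measurable_id.sub_const A).div_const _))
    exact h1.comp Complex.measurable_arg
  set S : ℕ → Set ℂ := fun k =>
    g ⁻¹' Ico (2 * Real.pi * (k : ℝ) / n - Real.pi / n)
              (2 * Real.pi * (k : ℝ) / n + Real.pi / n) \ {0} with hS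
  have hSmeas : ∀ k : ℕ, MeasurableSet (N ∩ S k) := fun k =>
    hclosed.measurableSet.inter
      ((hgmeas measurableSet_Ico).diff (measurableSet_singleton 0))
  -- pairwise disjointness of the sectors
  have hdisj : (↑(Finset.range n) : Set ℕ).PairwiseDisjoint fun k => N ∩ S k := by
    intro i _ j _ hij
    refine Set.disjoint_left.2 fun z hzi hzj => hij ?_
    obtain ⟨-, hgi, -⟩ := hzi
    obtain ⟨-, hgj, -⟩ := hzj
    -- g z lies in both Ico intervals
    by_contra hne
    rcases lt_or_gt_of_ne (fun h : i = j => hne h) with hlt | hlt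
    · have hij1 : (i:ℝ) + 1 ≤ j := by exact_mod_cast hlt
      have k1 : 2 * Real.pi * (j:ℝ) / n - Real.pi / n < 2 * Real.pi * (i:ℝ) / n + Real.pi / n :=
        lt_of_le_of_lt hgj.1 hgi.2
      have k2 : (2 * Real.pi * (j:ℝ) - Real.pi) / n < (2 * Real.pi * (i:ℝ) + Real.pi) / n := by
        rw [sub_div, add_div]; exact k1
      have k3 : 2 * Real.pi * (j:ℝ) - Real.pi < 2 * Real.pi * (i:ℝ) + Real.pi :=
        (div_lt_div_iff_of_pos_right hn0).1 k2
      nlinarith [Real.pi_pos]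
    · have hij1 : (j:ℝ) + 1 ≤ i := by exact_mod_cast hlt
      have k1 : 2 * Real.pi * (i:ℝ) / n - Real.pi / n < 2 * Real.pi * (j:ℝ) / n + Real.pi / n :=
        lt_of_le_of_lt hgi.1 hgj.2
      have k2 : (2 * Real.pi * (i:ℝ) - Real.pi) / n < (2 * Real.pi * (j:ℝ) + Real.pi) / n := by
        rw [sub_div, add_div]; exact k1
      have k3 : 2 * Real.pi * (i:ℝ) - Real.pi < 2 * Real.pi * (j:ℝ) + Real.pi :=
        (div_lt_div_iff_of_pos_right hn0).1 k2
      nlinarith [Real.pi_pos]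
  -- lower bound for each piece
  have hlow : ∀ k ∈ Finset.range n, ENNReal.ofReal (b - a) ≤ μH[1] (N ∩ S k) := by
    intro k hk
    rw [Finset.mem_range] at hk
    have hkn : (k:ℝ) + 1 ≤ n := by exact_mod_cast hk
    have himg : Ioc a b ⊆ (fun z : ℂ => ‖z‖) '' (N ∩ S k) := by
      rintro r ⟨har, hrb⟩
      have hr0 : 0 < r := lt_of_le_of_lt ha har
      obtain ⟨z, hzN, hzabs, θ, hθ, hzeq⟩ := hsec k hk r ⟨har.le, hrb⟩
      have hz0 : z ≠ 0 := by
        intro h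
        rw [h, norm_zero] at hzabs
        exact hr0.ne hzabs
      have hgz : g z = θ := by
        rw [hg]
        rw [toIcoMod_eq_iff hπ]
        constructor
        · constructor
          · have h0 : 0 ≤ 2 * Real.pi * (k:ℝ) / n := by positivity
            have := hθ.1
            rw [hA]; linarith
          · have hub : 2 * Real.pi * (k:ℝ) / n + Real.pi / n ≤ A + 2 * Real.pi := by
              rw [hA, ← sub_nonneg]
              have heq : -(Real.pi / n) + 2 * Real.pi
                  - (2 * Real.pi * (k:ℝ) / n + Real.pi / n)
                  = (2 * Real.pi * (n:ℝ) - 2 * Real.pi * (k:ℝ) - 2 * Real.pi) / n := by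
                field_simp
                ring
              rw [heq]
              apply div_nonneg _ hn0.le
              nlinarith [Real.pi_pos]
            exact lt_of_lt_of_le hθ.2 hub
        · have harg : Complex.arg z = toIocMod (mul_pos two_pos Real.pi_pos) (-Real.pi) θ := by
            rw [hzeq, Complex.arg_real_mul _ hr0, Complex.arg_exp_mul_I]
          refine ⟨-(toIocDiv (mul_pos two_pos Real.pi_pos) (-Real.pi) θ), ?_⟩
          rw [harg, toIocMod, neg_zsmul, sub_eq_add_neg]
      have hzS : z ∈ S k := by
        refine ⟨?_, hz0⟩
        rw [mem_preimage, hgz]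
        exact hθ
      exact ⟨z, ⟨hzN, hzS⟩, hzabs⟩
    have hlip : LipschitzWith 1 (fun z : ℂ => ‖z‖) := by
      have : (fun z : ℂ => ‖z‖) = fun z => ‖z‖ := by
        funext z; rfl
      rw [this]
      exact lipschitzWith_one_norm
    calc ENNReal.ofReal (b - a) = μH[1] (Ioc a b) := by
          rw [MeasureTheory.hausdorffMeasure_real, Real.volume_Ioc]
      _ ≤ μH[1] ((fun z : ℂ => ‖z‖) '' (N ∩ S k)) := measure_mono himg
      _ ≤ μH[1] (N ∩ S k) := by
          simpa using hlip.hausdorffMeasure_image_le zero_le_one (N ∩ S k)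
  calc ENNReal.ofReal (n * (b - a))
      = ∑ _k ∈ Finset.range n, ENNReal.ofReal (b - a) := by
        rw [Finset.sum_const, Finset.card_range, nsmul_eq_mul,
          ENNReal.ofReal_mul (by positivity), ENNReal.ofReal_natCast]
    _ ≤ ∑ k ∈ Finset.range n, μH[1] (N ∩ S k) := Finset.sum_le_sum hlow
    _ = μH[1] (⋃ k ∈ Finset.range n, N ∩ S k) :=
        (measure_biUnion_finset hdisj fun k _ => hSmeas k).symm
    _ ≤ μH[1] N := measure_mono (iUnion₂_subset fun k _ => inter_subset_left)
end

section
/- (Chain/propagation of smallness estimate.) Let Ω ⊂⊂ Ω' ⊂ ℝ^N be bounded connected open sets and let ψ be a C² solution of Δψ + Vψ = 0 in Ω' with ‖V‖_{L^∞(Ω')} ≤ Λ, normalized so that ‖ψ‖_{L^∞(Ω')} = 1 and ‖ψ‖_{L^∞(Ω)} ≥ κ > 0. Assume the three-spheres inequality: there are 0 < r₁ < r₂ < r₃ < r₀ and constants K, C, θ > 0 such that for all x ∈ closure(Ω), if ‖ψ‖_{L^∞(B_{r₃}(x))} ≤ 1 and ‖ψ‖_{L^∞(B_{r₁}(x))}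 ≤ ε then ‖ψ‖_{L^∞(B_{r₂}(x))} ≤ K e^{C√Λ} ε^θ. Then there exist constants A, C' > 0 depending only on N, Ω, Ω', r₀, r₁, r₂, r₃, κ (not on ψ or Λ) such that ‖ψ‖_{L^∞(B_{r₁}(x))} ≥ A e^{−C'√Λ} for every x ∈ closure(Ω). -/
open Set MeasureTheory

/-- The Laplacian of `ψ : ℝ^n → ℝ` as the sum of second directional derivatives. -/
noncomputable def lap {n : ℕ} (ψ : EuclideanSpace ℝ (Fin n) → ℝ)
    (x : EuclideanSpace ℝ (Fin n)) : ℝ :=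
  ∑ i, fderiv ℝ (fun y => fderiv ℝ ψ y (EuclideanSpace.single i 1)) x
    (EuclideanSpace.single i 1)

/-- The sup norm of `ψ` over a set `S`. -/
noncomputable def supOn {n : ℕ} (ψ : EuclideanSpace ℝ (Fin n) → ℝ)
    (S : Set (EuclideanSpace ℝ (Fin n))) : ℝ :=
  sSup ((fun x => |ψ x|) '' S)


namespace Stmt11Aux

variable {E : Type*} [MetricSpace E]

/-- Chain-reachable sets: points of `X` reachable from `x` in at most `k` steps of size `< d`. -/
def S (X : Set E) (d : ℝ) (x : E) : ℕ → Set E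
  | 0 => {x}
  | (k+1) => {y | y ∈ X ∧ ∃ w ∈ S X d x k, dist y w < d}

lemma S_subset (X : Set E) (d : ℝ) {x : E} (hx : x ∈ X) : ∀ k, S X d x k ⊆ X
  | 0 => by intro y hy; simp only [S, mem_singleton_iff] at hy; exact hy ▸ hx
  | (k+1) => fun y hy => hy.1

lemma S_succ (X : Set E) {d : ℝ} (hd : 0 < d) {x : E} (hx : x ∈ X) (k : ℕ) :
    S X d x k ⊆ S X d x (k+1) := fun y hy =>
  ⟨S_subset X d hx k hy, y, hy, by simpa using hd⟩

lemma S_mono (X : Set E) {d : ℝ} (hd : 0 < d) {x : E} (hx : x ∈ X) {k l : ℕ} (h : k ≤ l) :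
    S X d x k ⊆ S X d x l := by
  induction l with
  | zero => simpa [Nat.le_zero.mp h] using subset_rfl
  | succ n ih =>
    rcases Nat.le_succ_iff.mp h with h' | h'
    · exact (ih h').trans (S_succ X hd hx n)
    · exact h' ▸ subset_rfl

lemma S_shift (X : Set E) {d : ℝ} (hd : 0 < d) {x : E} (hx : x ∈ X) {w : E} {j : ℕ}
    (hw : w ∈ S X d x j) : ∀ k, S X d w k ⊆ S X d x (j + k)
  | 0 => by
      intro y hy; simp only [S, mem_singleton_iff] at hy
      exact hy ▸ hw
  | (k+1) => by
      rintro y ⟨hyX, u, hu, hdu⟩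
      exact ⟨hyX, u, S_shift X hd hx hw k hu, hdu⟩

lemma subset_iUnion_S (X : Set E) (hX : IsPreconnected X) {d : ℝ} (hd : 0 < d)
    {x : E} (hx : x ∈ X) : X ⊆ ⋃ k, S X d x k := by
  by_contra h
  obtain ⟨y₀, hy₀X, hy₀⟩ := not_subset.mp h
  set U : Set E := ⋃ k, S X d x k with hU
  set u : Set E := ⋃ w ∈ U, Metric.ball w d with hu
  set v : Set E := ⋃ w ∈ X \ U, Metric.ball w d with hv
  have huo : IsOpen u := isOpen_biUnion fun _ _ => Metric.isOpen_ball
  have hvo : IsOpen v := isOpen_biUnion fun _ _ => Metric.isOpen_ball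
  have hXuU : ∀ z ∈ X, z ∈ u → z ∈ U := by
    rintro z hz hzu
    simp only [hu, mem_iUnion] at hzu
    obtain ⟨w, hwU, hzw⟩ := hzu
    simp only [hU, mem_iUnion] at hwU ⊢
    obtain ⟨k, hk⟩ := hwU
    exact ⟨k + 1, hz, w, hk, Metric.mem_ball.mp hzw⟩
  have hcover : X ⊆ u ∪ v := by
    intro z hz
    by_cases hzU : z ∈ U
    · exact Or.inl (mem_biUnion hzU (Metric.mem_ball_self hd))
    · exact Or.inr (mem_biUnion ⟨hz, hzU⟩ (Metric.mem_ball_self hd))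
  have hxU : x ∈ U := mem_iUnion.mpr ⟨0, mem_singleton x⟩
  have hXu : (X ∩ u).Nonempty := ⟨x, hx, mem_biUnion hxU (Metric.mem_ball_self hd)⟩
  have hXv : (X ∩ v).Nonempty := ⟨y₀, hy₀X, mem_biUnion ⟨hy₀X, hy₀⟩ (Metric.mem_ball_self hd)⟩
  obtain ⟨z, hzX, hzu, hzv⟩ := hX u v huo hvo hcover hXu hXv
  have hzU : z ∈ U := hXuU z hzX hzu
  simp only [hv, mem_iUnion] at hzv
  obtain ⟨w, ⟨hwX, hwU⟩, hzw⟩ := hzv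
  apply hwU
  simp only [hU, mem_iUnion] at hzU ⊢
  obtain ⟨k, hk⟩ := hzU
  exact ⟨k + 1, hwX, z, hk, by rw [dist_comm]; exact Metric.mem_ball.mp hzw⟩

lemma exists_m_of_base {X : Set E} (hXc : IsCompact X) (hXp : IsPreconnected X)
    {d : ℝ} (hd : 0 < d) {x : E} (hx : x ∈ X) : ∃ m, X ⊆ S X d x m := by
  have hcov : X ⊆ ⋃ k : ℕ, ⋃ w ∈ S X d x k, Metric.ball w d := by
    intro z hz
    obtain ⟨k, hk⟩ := mem_iUnion.mp (subset_iUnion_S X hXp hd hx hz)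
    exact mem_iUnion.mpr ⟨k, mem_biUnion hk (Metric.mem_ball_self hd)⟩
  obtain ⟨t, ht⟩ := hXc.elim_finite_subcover (fun k => ⋃ w ∈ S X d x k, Metric.ball w d)
      (fun k => isOpen_biUnion fun _ _ => Metric.isOpen_ball) hcov
  refine ⟨t.sup id + 1, fun z hz => ?_⟩
  have := ht hz
  simp only [mem_iUnion] at this
  obtain ⟨k, hkt, w, hw, hzw⟩ := this
  have hz1 : z ∈ S X d x (k + 1) := ⟨hz, w, hw, Metric.mem_ball.mp hzw⟩
  exact S_mono X hd hx (Nat.succ_le_succ (Finset.le_sup (f := id) hkt)) hz1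

lemma exists_m_uniform {X : Set E} (hXc : IsCompact X) (hXp : IsPreconnected X)
    {d : ℝ} (hd : 0 < d) : ∃ m, ∀ x ∈ X, X ⊆ S X d x m := by
  rcases X.eq_empty_or_nonempty with hXe | hXne
  · exact ⟨0, fun x hx => by simp [hXe] at hx⟩
  choose! k hk using fun x (hx : x ∈ X) => exists_m_of_base hXc hXp hd hx
  have hcov : X ⊆ ⋃ x : X, Metric.ball (x : E) d := fun z hz =>
    mem_iUnion.mpr ⟨⟨z, hz⟩, Metric.mem_ball_self hd⟩
  obtain ⟨t, ht⟩ := hXc.elim_finite_subcover (fun x : X => Metric.ball (x : E) d)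
      (fun _ => Metric.isOpen_ball) hcov
  refine ⟨t.sup (fun x => k (x : E)) + 1, fun x' hx' z hz => ?_⟩
  have := ht hx'
  simp only [mem_iUnion] at this
  obtain ⟨⟨w, hwX⟩, hwt, hx'w⟩ := this
  have hwS1 : w ∈ S X d x' 1 :=
    ⟨hwX, x', mem_singleton x', by rw [dist_comm]; exact Metric.mem_ball.mp hx'w⟩
  have h1 : z ∈ S X d x' (1 + k w) := S_shift X hd hx' hwS1 (k w) (hk w hwX hz)
  refine S_mono X hd hx' ?_ h1
  rw [Nat.add_comm 1 (k w)]
  exact Nat.succ_le_succ (Finset.le_sup (f := fun x : X => k (x : E)) hwt)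

/-- iterated three-spheres bound -/
noncomputable def iter (D θ t : ℝ) : ℕ → ℝ
  | 0 => t
  | (k+1) => D * (iter D θ t k) ^ θ

lemma iter_pos {D θ t : ℝ} (hD : 0 < D) (ht : 0 < t) : ∀ k, 0 < iter D θ t k
  | 0 => ht
  | (k+1) => mul_pos hD (Real.rpow_pos_of_pos (iter_pos hD ht k) θ)

lemma iter_le {D θ t : ℝ} (hD : 1 ≤ D) (ht : 0 < t) (hθ : 0 < θ) (hθ1 : θ < 1) :
    ∀ k, iter D θ t k ≤ D ^ ((1 - θ)⁻¹ : ℝ) * t ^ ((θ ^ k : ℝ))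
  | 0 => by
      have h1 : (1 : ℝ) ≤ D ^ ((1 - θ)⁻¹ : ℝ) :=
        Real.one_le_rpow hD (by rw [inv_nonneg]; linarith)
      simpa [iter, Real.rpow_one] using le_mul_of_one_le_left ht.le h1
  | (k+1) => by
      have hD0 : (0 < D) := lt_of_lt_of_le one_pos hD
      have hik := iter_le hD ht hθ hθ1 k
      have hipos := iter_pos (θ := θ) hD0 ht k
      have step1 : iter D θ t (k+1) ≤ D * (D ^ ((1 - θ)⁻¹ : ℝ) * t ^ ((θ ^ k : ℝ))) ^ θ := by
        have := Real.rpow_le_rpow hipos.le hik hθ.le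
        simpa [iter] using mul_le_mul_of_nonneg_left this hD0.le
      refine step1.trans_eq ?_
      rw [Real.mul_rpow (Real.rpow_pos_of_pos hD0 _).le (Real.rpow_pos_of_pos ht _).le,
        ← Real.rpow_mul hD0.le, ← Real.rpow_mul ht.le]
      have h1θ : (1 - θ) ≠ 0 := by linarith
      have hexp : (1 : ℝ) + (1 - θ)⁻¹ * θ = (1 - θ)⁻¹ := by field_simp; ring
      calc D * (D ^ ((1 - θ)⁻¹ * θ : ℝ) * t ^ (θ ^ k * θ))
          = D ^ ((1 : ℝ) + (1 - θ)⁻¹ * θ) * t ^ (θ ^ k * θ) := by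
            rw [Real.rpow_add hD0, Real.rpow_one]; ring
        _ = D ^ ((1 - θ)⁻¹ : ℝ) * t ^ (θ ^ (k + 1)) := by rw [hexp, pow_succ]

end Stmt11Aux

open Stmt11Aux in
/-- (Chain/propagation of smallness.)  Let `Ω ⊂⊂ Ω' ⊂ ℝ^N` be bounded
connected open sets.  There are constants `A, C' > 0` depending only on `N, Ω, Ω',
r₀,…,r₃, κ` (and the three-spheres constants `K, C, θ`, which depend only on `N` and the
radii) — but not on `ψ, V` or `Λ` — such that every `C²` solution `ψ` of `Δψ + Vψ = 0` in
`Ω'` with `‖V‖_∞ ≤ Λ`, normalized by `‖ψ‖_{L^∞(Ω')} = 1` and `‖ψ‖_{L^∞(Ω)} ≥ κ`, and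
satisfying the three-spheres inequality, obeys
`‖ψ‖_{L^∞(B_{r₁}(x))} ≥ A e^{−C'√Λ}` for every `x ∈ closure Ω`. -/
theorem stmt11 (N : ℕ) (Ω Ω' : Set (EuclideanSpace ℝ (Fin N)))
    (hΩopen : IsOpen Ω) (hΩ'open : IsOpen Ω')
    (hΩconn : IsConnected Ω) (hΩ'conn : IsConnected Ω')
    (hΩ'bd : Bornology.IsBounded Ω') (hsub : closure Ω ⊆ Ω')
    (r₀ r₁ r₂ r₃ K C θ κ : ℝ)
    (h1 : 0 < r₁) (h12 : r₁ < r₂) (h23 : r₂ < r₃) (h30 : r₃ < r₀)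
    (hr₀ : ∀ x ∈ closure Ω, Metric.ball x r₀ ⊆ Ω')
    (hK : 0 < K) (hC : 0 < C) (hθ : 0 < θ) (hθ1 : θ < 1) (hκ : 0 < κ) :
    ∃ A C' : ℝ, 0 < A ∧ 0 < C' ∧
      ∀ Λ : ℝ, 0 ≤ Λ → ∀ ψ V : EuclideanSpace ℝ (Fin N) → ℝ,
        ContDiffOn ℝ 2 ψ Ω' →
        (∀ x ∈ Ω', lap ψ x + V x * ψ x = 0) →
        (∀ x ∈ Ω', |V x| ≤ Λ) →
        supOn ψ Ω' = 1 → κ ≤ supOn ψ Ω →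
        (∀ ε > (0 : ℝ), ∀ x ∈ closure Ω,
          supOn ψ (Metric.ball x r₃) ≤ 1 → supOn ψ (Metric.ball x r₁) ≤ ε →
          supOn ψ (Metric.ball x r₂) ≤ K * Real.exp (C * Real.sqrt Λ) * ε ^ θ) →
        ∀ x ∈ closure Ω,
          A * Real.exp (-C' * Real.sqrt Λ) ≤ supOn ψ (Metric.ball x r₁) := by
    classical
  set X : Set (EuclideanSpace ℝ (Fin N)) := closure Ω with hXdef
  have hXc : IsCompact X :=
    Metric.isCompact_of_isClosed_isBounded isClosed_closure (hΩ'bd.subset hsub)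
  have hXp : IsPreconnected X := hΩconn.isPreconnected.closure
  have hd : (0 : ℝ) < r₂ - r₁ := by linarith
  obtain ⟨m, hm⟩ := Stmt11Aux.exists_m_uniform hXc hXp hd
  set p : ℝ := θ ^ m with hpdef
  have hp : 0 < p := pow_pos hθ m
  set c : ℝ := (1 - θ)⁻¹ with hcdef
  have hc : 0 < c := inv_pos.mpr (by linarith)
  set K' : ℝ := max K 1 with hK'def
  have hK'1 : (1 : ℝ) ≤ K' := le_max_right K 1
  have hK'0 : (0 : ℝ) < K' := lt_of_lt_of_le one_pos hK'1
  refine ⟨κ ^ (1/p) / K' ^ (c/p), C * c / p, ?_, ?_, ?_⟩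
  · exact div_pos (Real.rpow_pos_of_pos hκ _) (Real.rpow_pos_of_pos hK'0 _)
  · positivity
  intro Λ hΛ ψ V hψ hpde hV hsup1 hκψ h3s x hx
  -- |ψ| ≤ 1 on Ω'
  have hbdd : BddAbove ((fun z => |ψ z|) '' Ω') := by
    by_contra hb
    have h0 := Real.sSup_of_not_bddAbove hb
    rw [supOn] at hsup1
    rw [hsup1] at h0
    exact one_ne_zero h0
  have habs : ∀ z ∈ Ω', |ψ z| ≤ 1 := by
    intro z hz
    have := le_csSup hbdd (mem_image_of_mem (fun z => |ψ z|) hz)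
    rw [supOn] at hsup1
    exact hsup1 ▸ this
  have hballs : ∀ r, r ≤ r₀ → ∀ w ∈ X, Metric.ball w r ⊆ Ω' := fun r hr w hw =>
    (Metric.ball_subset_ball hr).trans (hr₀ w hw)
  have hbddS : ∀ S : Set (EuclideanSpace ℝ (Fin N)), S ⊆ Ω' →
      BddAbove ((fun z => |ψ z|) '' S) := by
    intro S hS
    refine ⟨1, ?_⟩
    rintro a ⟨z, hz, rfl⟩
    exact habs z (hS hz)
  have hsupone : ∀ S : Set (EuclideanSpace ℝ (Fin N)), S ⊆ Ω' → supOn ψ S ≤ 1 := by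
    intro S hS
    refine Real.sSup_le ?_ zero_le_one
    rintro a ⟨z, hz, rfl⟩
    exact habs z (hS hz)
  -- main estimate
  refine le_of_forall_pos_le_add ?_
  intro δ hδ
  have hε0 : 0 ≤ supOn ψ (Metric.ball x r₁) := by
    refine Real.sSup_nonneg ?_
    rintro a ⟨z, _, rfl⟩
    exact abs_nonneg _
  set t : ℝ := supOn ψ (Metric.ball x r₁) + δ with htdef
  have ht : 0 < t := by positivity
  set D : ℝ := K' * Real.exp (C * Real.sqrt Λ) with hDdef
  have hexp1 : (1 : ℝ) ≤ Real.exp (C * Real.sqrt Λ) := Real.one_le_exp (by positivity)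
  have hD1 : (1 : ℝ) ≤ D := by
    have := mul_le_mul hK'1 hexp1 zero_le_one hK'0.le
    simpa using this
  have hD0 : (0 : ℝ) < D := lt_of_lt_of_le one_pos hD1
  -- propagation along chains
  have claim : ∀ k, ∀ y ∈ Stmt11Aux.S X (r₂ - r₁) x k,
      supOn ψ (Metric.ball y r₁) ≤ Stmt11Aux.iter D θ t k := by
    intro k
    induction k with
    | zero =>
      intro y hy
      simp only [Stmt11Aux.S, mem_singleton_iff] at hy
      subst hy
      simp only [Stmt11Aux.iter, htdef]
      linarith
    | succ k ih =>
      rintro y ⟨hyX, w, hwS, hdyw⟩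
      have hwX : w ∈ X := Stmt11Aux.S_subset X (r₂ - r₁) hx k hwS
      have hiterpos := Stmt11Aux.iter_pos (θ := θ) hD0 ht k
      have h2 := h3s (Stmt11Aux.iter D θ t k) hiterpos w hwX
        (hsupone _ (hballs r₃ h30.le w hwX)) (ih w hwS)
      have h2' : supOn ψ (Metric.ball w r₂) ≤ Stmt11Aux.iter D θ t (k+1) := by
        refine h2.trans ?_
        show _ ≤ D * (Stmt11Aux.iter D θ t k) ^ θ
        rw [hDdef]
        have hrp : (0:ℝ) ≤ Real.exp (C * Real.sqrt Λ) * (Stmt11Aux.iter D θ t k) ^ θ := by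
          positivity
        calc K * Real.exp (C * Real.sqrt Λ) * (Stmt11Aux.iter D θ t k) ^ θ
            = K * (Real.exp (C * Real.sqrt Λ) * (Stmt11Aux.iter D θ t k) ^ θ) := by ring
          _ ≤ K' * (Real.exp (C * Real.sqrt Λ) * (Stmt11Aux.iter D θ t k) ^ θ) :=
              mul_le_mul_of_nonneg_right (le_max_left K 1) hrp
          _ = K' * Real.exp (C * Real.sqrt Λ) * (Stmt11Aux.iter D θ t k) ^ θ := by ring
      have hsubb : Metric.ball y r₁ ⊆ Metric.ball w r₂ := by
        intro z hz
        rw [Metric.mem_ball] at hz ⊢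
        have h3 := dist_triangle z y w
        linarith
      refine Real.sSup_le ?_ (Stmt11Aux.iter_pos (θ := θ) hD0 ht (k+1)).le
      rintro a ⟨z, hz, rfl⟩
      exact le_trans (le_csSup (hbddS _ (hballs r₂ (by linarith) w hwX))
        (mem_image_of_mem _ (hsubb hz))) h2'
  -- κ ≤ iter m
  have hκiter : κ ≤ Stmt11Aux.iter D θ t m := by
    refine le_trans hκψ (Real.sSup_le ?_ (Stmt11Aux.iter_pos (θ := θ) hD0 ht m).le)
    rintro a ⟨z, hzΩ, rfl⟩
    have hzX : z ∈ X := subset_closure hzΩ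
    have hz1 := claim m z (hm x hx hzX)
    exact le_trans (le_csSup (hbddS _ (hballs r₁ (by linarith) z hzX))
      (mem_image_of_mem _ (Metric.mem_ball_self h1))) hz1
  have hfin : κ ≤ D ^ c * t ^ p :=
    le_trans hκiter (Stmt11Aux.iter_le hD1 ht hθ hθ1 m)
  -- invert
  have hDc : (0:ℝ) < D ^ c := Real.rpow_pos_of_pos hD0 c
  have h6 : κ / D ^ c ≤ t ^ p := by
    rw [div_le_iff₀ hDc]
    rw [mul_comm] at hfin
    exact hfin
  have h7 : (κ / D ^ c) ^ (1/p) ≤ (t ^ p) ^ (1/p) :=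
    Real.rpow_le_rpow (by positivity) h6 (by positivity)
  have h8 : (t ^ p) ^ (1/p) = t := by
    rw [← Real.rpow_mul ht.le, mul_one_div_cancel hp.ne', Real.rpow_one]
  rw [h8] at h7
  refine le_trans (le_of_eq ?_) h7
  -- A * exp(-C'√Λ) = (κ / D^c)^(1/p)
  rw [Real.div_rpow hκ.le hDc.le, ← Real.rpow_mul hD0.le, mul_one_div, hDdef,
    Real.mul_rpow hK'0.le (Real.exp_pos _).le, ← Real.exp_mul,
    show C * Real.sqrt Λ * (c / p) = -(-(C * c / p) * Real.sqrt Λ) by ring,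
    Real.exp_neg]
  field_simp
end

section
/- (Doubling exponent dichotomy.) Let ψ : ℝ^N → ℝ, x₀ ∈ ℝ^N, d > 0, r₁ ∈ (0,1), m = ⌊log₂(C A⁻¹ r₁^{−d})⌋ + 1 where A ≤ C⁻¹ and constants C, A > 0 are such that ‖ψ‖_{r,x₀} ≤ C for all r ≤ r₁ and ‖ψ‖_{r,x₀} ≥ A r^d for all r ∈ (0, r₁] (here ‖ψ‖_{r,x} = r^{−N/2}‖ψ‖_{L²(B_r(x))}). Then there exists r ∈ [r₁/2^m, r₁] such that ‖ψ‖_{r,x₀} < 2^{d+1} ‖ψ‖_{r/2,x₀}. -/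
open Set MeasureTheory

/-- The weighted `L²` norm `‖ψ‖_{r,x} = r^{−N/2} ‖ψ‖_{L²(B_r(x))}`. -/
noncomputable def wnorm (N : ℕ) (ψ : EuclideanSpace ℝ (Fin N) → ℝ)
    (x : EuclideanSpace ℝ (Fin N)) (r : ℝ) : ℝ :=
  r ^ (-(N : ℝ) / 2) * Real.sqrt (∫ y in Metric.ball x r, (ψ y) ^ 2)

/-- (Doubling exponent dichotomy.)  Suppose `‖ψ‖_{r,x₀} ≤ C` and
`‖ψ‖_{r,x₀} ≥ A r^d` for all `r ∈ (0, r₁]`, with `A ≤ C⁻¹`, and set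
`m = ⌊log₂(C A⁻¹ r₁^{−d})⌋ + 1`.  Then at some scale `r ∈ [r₁/2^m, r₁]` the doubling
inequality `‖ψ‖_{r,x₀} < 2^{d+1} ‖ψ‖_{r/2,x₀}` holds. -/
theorem stmt13 (N : ℕ) (ψ : EuclideanSpace ℝ (Fin N) → ℝ)
    (x₀ : EuclideanSpace ℝ (Fin N)) (d r₁ A C : ℝ)
    (hd : 0 < d) (hr₁ : 0 < r₁) (hr₁1 : r₁ < 1)
    (hA : 0 < A) (hC : 0 < C) (hAC : A ≤ C⁻¹)
    (hub : ∀ r ∈ Ioc (0 : ℝ) r₁, wnorm N ψ x₀ r ≤ C)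
    (hlb : ∀ r ∈ Ioc (0 : ℝ) r₁, A * r ^ d ≤ wnorm N ψ x₀ r)
    (m : ℕ) (hm : m = Nat.floor (Real.logb 2 (C * A⁻¹ * r₁ ^ (-d))) + 1) :
    ∃ r ∈ Icc (r₁ / 2 ^ m) r₁,
      wnorm N ψ x₀ r < 2 ^ (d + 1) * wnorm N ψ x₀ (r / 2) := by
  by_contra hcon
  push_neg at hcon
  have h2 : (0:ℝ) < 2 := by norm_num
  have key : ∀ j, j ≤ m →
      (2:ℝ) ^ ((d+1) * j) * wnorm N ψ x₀ (r₁ / 2 ^ j) ≤ wnorm N ψ x₀ r₁ := by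
    intro j hj
    induction j with
    | zero => simp
    | succ j ih =>
      have hj' : j ≤ m := Nat.le_of_succ_le hj
      have hmem : r₁ / 2 ^ j ∈ Icc (r₁ / 2 ^ m) r₁ := by
        constructor
        · apply div_le_div_of_nonneg_left hr₁.le (by positivity)
          exact pow_le_pow_right₀ (by norm_num) hj'
        · apply div_le_self hr₁.le
          exact one_le_pow₀ (by norm_num)
      have hdb := hcon _ hmem
      have heq : r₁ / 2 ^ j / 2 = r₁ / 2 ^ (j+1) := by
        rw [pow_succ]; ring
      rw [heq] at hdb
      calc (2:ℝ) ^ ((d+1) * (j+1:ℕ)) * wnorm N ψ x₀ (r₁ / 2 ^ (j+1))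
          = (2:ℝ) ^ ((d+1) * j) * ((2:ℝ) ^ (d+1) * wnorm N ψ x₀ (r₁ / 2 ^ (j+1))) := by
            rw [← mul_assoc, ← Real.rpow_add h2]
            push_cast
            ring_nf
        _ ≤ (2:ℝ) ^ ((d+1) * j) * wnorm N ψ x₀ (r₁ / 2 ^ j) := by
            have hnn : (0:ℝ) ≤ (2:ℝ) ^ ((d+1) * (j:ℝ)) := Real.rpow_nonneg h2.le _
            nlinarith [hdb, hnn, mul_le_mul_of_nonneg_left hdb hnn]
        _ ≤ wnorm N ψ x₀ r₁ := ih hj'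
  -- lower bound at scale r₁ / 2^m
  have hmempos : (0:ℝ) < r₁ / 2 ^ m := by positivity
  have hmle : r₁ / 2 ^ m ≤ r₁ := by
    apply div_le_self hr₁.le
    exact one_le_pow₀ (by norm_num)
  have hlbm := hlb _ ⟨hmempos, hmle⟩
  have hubr := hub r₁ ⟨hr₁, le_refl _⟩
  have hchain : (2:ℝ) ^ ((d+1) * m) * (A * (r₁ / 2 ^ m) ^ d) ≤ C := by
    calc (2:ℝ) ^ ((d+1) * m) * (A * (r₁ / 2 ^ m) ^ d)
        ≤ (2:ℝ) ^ ((d+1) * m) * wnorm N ψ x₀ (r₁ / 2 ^ m) := by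
          have hnn : (0:ℝ) ≤ (2:ℝ) ^ ((d+1) * (m:ℝ)) := Real.rpow_nonneg h2.le _
          nlinarith [hlbm, hnn, mul_le_mul_of_nonneg_left hlbm hnn]
      _ ≤ wnorm N ψ x₀ r₁ := key m le_rfl
      _ ≤ C := hubr
  -- simplify the left side to A * r₁ ^ d * 2 ^ m
  have hsimp : (2:ℝ) ^ ((d+1) * m) * (A * (r₁ / 2 ^ m) ^ d)
      = A * r₁ ^ d * 2 ^ m := by
    have h2m : ((2:ℝ) ^ m) = (2:ℝ) ^ (m:ℝ) := (Real.rpow_natCast 2 m).symm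
    have h1 : ((2:ℝ) ^ (m:ℝ)) ^ d = (2:ℝ) ^ ((m:ℝ) * d) := (Real.rpow_mul h2.le _ _).symm
    have h2' : (2:ℝ) ^ ((d+1) * (m:ℝ)) = (2:ℝ) ^ ((m:ℝ) * d) * (2:ℝ) ^ (m:ℝ) := by
      rw [← Real.rpow_add h2]; ring_nf
    rw [Real.div_rpow hr₁.le (by positivity), h2m, h1, h2']
    have hpos : (0:ℝ) < (2:ℝ) ^ ((m:ℝ) * d) := Real.rpow_pos_of_pos h2 _
    field_simp
  rw [hsimp] at hchain
  -- conclude 2^m ≤ C * A⁻¹ * r₁ ^ (-d)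
  have hrd : (0:ℝ) < r₁ ^ d := Real.rpow_pos_of_pos hr₁ d
  have h2mle : (2:ℝ) ^ m ≤ C * A⁻¹ * r₁ ^ (-d) := by
    rw [Real.rpow_neg hr₁.le]
    have hq : (2:ℝ) ^ m ≤ C / (A * r₁ ^ d) := by
      rw [le_div_iff₀ (by positivity)]
      nlinarith [hchain]
    calc (2:ℝ) ^ m ≤ C / (A * r₁ ^ d) := hq
      _ = C * A⁻¹ * (r₁ ^ d)⁻¹ := by rw [div_eq_mul_inv, mul_inv]; ring
  -- but 2^m > C * A⁻¹ * r₁^(-d)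
  set X := C * A⁻¹ * r₁ ^ (-d) with hX
  have hXpos : 0 < X := by
    have := Real.rpow_pos_of_pos hr₁ (-d)
    positivity
  have hmgt : Real.logb 2 X < (m:ℝ) := by
    rw [hm]
    push_cast
    exact Nat.lt_floor_add_one _
  have : X < (2:ℝ) ^ m := by
    have h1 : X = (2:ℝ) ^ (Real.logb 2 X) := (Real.rpow_logb h2 (by norm_num) hXpos).symm
    rw [h1, ← Real.rpow_natCast 2 m]
    exact Real.rpow_lt_rpow_left_iff (by norm_num) |>.mpr hmgt
  linarith
end
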